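/- arXiv:1609.03278 — 2 statements merged into one kernel-verified Lean document; each statement's English description precedes it below -/
import Mathlib

section
/- Bounded change of the preconditioned quasi-entropy under a rotation gate: there is a universal constant C > 0 such that for all n, all n×n Laurent-polynomial matrices M, A, B over ℂ, and every plane-rotation gate matrix R, one has |Φ_{A,B}(R · M) − Φ_{A,B}(M)| ≤ C · ‖M·A‖_{2,∞} · ‖M·B‖_{2,∞}, where |·| is the complex modulus. -/
open scoped ComplexConjugate
open LaurentPolynomial Finset

noncomputable section

/-- Evaluation of a Laurent polynomial at a complex number. -/
def Leval (ω : ℂ) (p : LaurentPolynomial ℂ) : ℂ :=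
  ∑ k ∈ p.coeff.support, p.coeff k * ω ^ k

/-- Para-conjugate of a Laurent polynomial: conjugate the coefficients and substitute `z⁻¹`. -/
def paraConj (p : LaurentPolynomial ℂ) : LaurentPolynomial ℂ :=
  AddMonoidAlgebra.ofCoeff
    (Finsupp.equivMapDomain (Equiv.neg ℤ) (Finsupp.mapRange (starRingEnd ℂ) (map_zero _) p.coeff))

/-- `U*`: the transpose of `U` with every entry para-conjugated. -/
def paraConjTranspose {n : ℕ} (U : Matrix (Fin n) (Fin n) (LaurentPolynomial ℂ)) :
    Matrix (Fin n) (Fin n) (LaurentPolynomial ℂ) :=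
  U.transpose.map paraConj

/-- A Laurent-polynomial matrix is paraunitary if `U* * U = 1`. -/
def IsParaunitary {n : ℕ} (U : Matrix (Fin n) (Fin n) (LaurentPolynomial ℂ)) : Prop :=
  paraConjTranspose U * U = 1

/-- Entrywise evaluation of a matrix of Laurent polynomials at a complex number. -/
def MatEval {n : ℕ} (ω : ℂ) (M : Matrix (Fin n) (Fin n) (LaurentPolynomial ℂ)) :
    Matrix (Fin n) (Fin n) ℂ :=
  M.map (Leval ω)

/-- A plane-rotation gate: identity except on the 2×2 principal submatrix in rows/columns
`a ≠ b`, where it is a real orthogonal 2×2 matrix (embedded as constant Laurent polynomials). -/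
def IsRotationGate {n : ℕ} (G : Matrix (Fin n) (Fin n) (LaurentPolynomial ℂ)) : Prop :=
  ∃ (a b : Fin n) (R : Matrix (Fin 2) (Fin 2) ℝ), a ≠ b ∧ R.transpose * R = 1 ∧
    G a a = LaurentPolynomial.C (R 0 0 : ℂ) ∧
    G a b = LaurentPolynomial.C (R 0 1 : ℂ) ∧
    G b a = LaurentPolynomial.C (R 1 0 : ℂ) ∧
    G b b = LaurentPolynomial.C (R 1 1 : ℂ) ∧
    (∀ i : Fin n, i ≠ a → i ≠ b → G i i = 1) ∧
    (∀ i j : Fin n, i ≠ j → ¬(i = a ∧ j = b) → ¬(i = b ∧ j = a) → G i j = 0)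

/-- A monomial gate: diagonal, equal to `1` on every diagonal entry except one, which is `z^k`. -/
def IsMonomialGate {n : ℕ} (G : Matrix (Fin n) (Fin n) (LaurentPolynomial ℂ)) : Prop :=
  ∃ (a : Fin n) (k : ℤ),
    G a a = LaurentPolynomial.T k ∧
    (∀ i : Fin n, i ≠ a → G i i = 1) ∧
    (∀ i j : Fin n, i ≠ j → G i j = 0)

/-- A Laurent lift of length `m`: `M 0 = 1` and each step is left multiplication by a
plane-rotation or monomial gate. -/
def IsLaurentLift {n : ℕ} (m : ℕ) (M : ℕ → Matrix (Fin n) (Fin n) (LaurentPolynomial ℂ)) : Prop :=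
  M 0 = 1 ∧ ∀ t < m, ∃ G : Matrix (Fin n) (Fin n) (LaurentPolynomial ℂ),
    (IsRotationGate G ∨ IsMonomialGate G) ∧ M (t + 1) = G * M t

/-- The union of the supports of all the entries of a Laurent-polynomial matrix. -/
def matSupport {n : ℕ} (M : Matrix (Fin n) (Fin n) (LaurentPolynomial ℂ)) : Finset ℤ :=
  (Finset.univ : Finset (Fin n × Fin n)).biUnion fun ij => (M ij.1 ij.2).coeff.support

/-- `deg(M)`: the maximal exponent with a nonzero coefficient over all nonzero entries
(junk value `0` for the zero matrix). -/
def matDeg {n : ℕ} (M : Matrix (Fin n) (Fin n) (LaurentPolynomial ℂ)) : ℤ :=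
  (matSupport M).max.unbotD 0

/-- `val(M)`: the minimal exponent with a nonzero coefficient over all nonzero entries
(junk value `0` for the zero matrix). -/
def matVal {n : ℕ} (M : Matrix (Fin n) (Fin n) (LaurentPolynomial ℂ)) : ℤ :=
  (matSupport M).min.untopD 0

/-- A Laurent lift is `Δ`-algebraically `κ`-well conditioned if
`Δ ^ (val(M_t) - deg(M_t)) ≤ κ` for all `t`. -/
def IsAlgWellConditioned {n : ℕ} (m : ℕ) (M : ℕ → Matrix (Fin n) (Fin n) (LaurentPolynomial ℂ))
    (Δ κ : ℝ) : Prop :=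
  ∀ t ≤ m, Δ ^ (matVal (M t) - matDeg (M t)) ≤ κ

/-- The L2 operator (spectral) norm of a complex matrix. -/
def specNorm {n : ℕ} (A : Matrix (Fin n) (Fin n) ℂ) : ℝ :=
  ‖Matrix.toEuclideanCLM (𝕜 := ℂ) A‖

/-- The Walsh–Hadamard matrix of order `n = 2^s`:
`H_n(i,j) = n^{-1/2} · (-1)^{⟨[i],[j]⟩}` with `⟨·,·⟩` the mod-2 inner product of bit vectors. -/
def WalshHadamard (s : ℕ) : Matrix (Fin (2 ^ s)) (Fin (2 ^ s)) ℝ :=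
  fun i j => (Real.sqrt (2 ^ s))⁻¹ *
    (-1 : ℝ) ^ (∑ r ∈ Finset.range s, (Nat.testBit i.val r).toNat * (Nat.testBit j.val r).toNat)

/-- The quasi-entropy kernel `h(u) = -u·log₂|u|` (note `h 0 = 0`, since `Real.logb 2 0 = 0`). -/
def hQE (u : ℂ) : ℂ := -u * (Real.logb 2 ‖u‖ : ℂ)

/-- The preconditioned quasi-entropy
`Φ_{A,B}(M) = Σ_k Σ_{i,j} h(coeff((M·A)_{i,j},k) · conj(coeff((M·B)_{i,j},k)))`.
The sum over `k` is restricted to a finite set supporting all nonzero terms. -/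
def Phi {n : ℕ} (A B M : Matrix (Fin n) (Fin n) (LaurentPolynomial ℂ)) : ℂ :=
  ∑ i : Fin n, ∑ j : Fin n,
    ∑ k ∈ ((M * A) i j).coeff.support ∪ ((M * B) i j).coeff.support,
      hQE (((M * A) i j).coeff k * conj (((M * B) i j).coeff k))

/-- The norm of a Laurent polynomial: `sqrt (Σ_k |coeff(p,k)|²)`. -/
def pnorm (p : LaurentPolynomial ℂ) : ℝ :=
  Real.sqrt (∑ k ∈ p.coeff.support, ‖p.coeff k‖ ^ 2)

/-- The norm of the `i`-th row of a Laurent-polynomial matrix. -/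
def rowNorm {n : ℕ} (M : Matrix (Fin n) (Fin n) (LaurentPolynomial ℂ)) (i : Fin n) : ℝ :=
  Real.sqrt (∑ j : Fin n, pnorm (M i j) ^ 2)

/-- The `(2,∞)` norm of a Laurent-polynomial matrix: the maximum row norm. -/
def norm2inf {n : ℕ} (M : Matrix (Fin n) (Fin n) (LaurentPolynomial ℂ)) : ℝ :=
  ⨆ i : Fin n, rowNorm M i

end

/-! Only rows `a` and `b` change, and for every column `j` and exponent `k` the coefficient
pairs `x = (N a j k, N b j k)`, `y = (P a j k, P b j k)` of `N = M * A`, `P = M * B` are moved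
by one unitary `U`. Since `h w + w log₂ c = -w log₂ (|w| / c)` and `t |log₂ t| ≤ 2` on `[0, 1]`,
with `c = ‖x‖ ‖y‖` each of the four terms `h (x_i ȳ_i)`, `h ((Ux)_i conj (Uy)_i)` is within `2c` of
`-w log₂ c`, and these linear corrections cancel because `U` preserves `Σ x_i ȳ_i`. So the change
at `(j, k)` is at most `8 ‖x‖ ‖y‖`, and Cauchy–Schwarz over `(j, k)` bounds the total by
`8 √(r_a(N)² + r_b(N)²) √(r_a(P)² + r_b(P)²) ≤ 16 ‖N‖_{2,∞} ‖P‖_{2,∞}`, `r` the row norms. -/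

open Matrix

open Real in
lemma mul_abs_logb_le_two {t : ℝ} (ht0 : 0 ≤ t) (ht1 : t ≤ 1) : t * |logb 2 t| ≤ 2 := by
  rcases ht0.eq_or_lt with rfl | ht0
  · simp
  have hlog2 : 1 / 2 < log 2 := by linarith [log_two_gt_d9]
  have hlt := abs_log_mul_self_lt t ht0 ht1
  rw [logb, abs_div, abs_of_pos (by linarith : (0 : ℝ) < log 2), mul_div_assoc',
    div_le_iff₀ (by linarith), mul_comm, ← abs_of_pos ht0, ← abs_mul, abs_of_pos ht0]
  linarith

lemma norm_hQE_add_mul_logb_le {w : ℂ} {c : ℝ} (hw : ‖w‖ ≤ c) :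
    ‖hQE w + w * (Real.logb 2 c : ℂ)‖ ≤ 2 * c := by
  rcases eq_or_ne w 0 with rfl | hw0
  · simpa [hQE] using hw
  have hc : 0 < c := (norm_pos_iff.mpr hw0).trans_le hw
  have hquot : hQE w + w * (Real.logb 2 c : ℂ) = -w * (Real.logb 2 (‖w‖ / c) : ℂ) := by
    rw [hQE, Real.logb_div (norm_ne_zero_iff.mpr hw0) hc.ne']
    push_cast
    ring
  have ht := mul_abs_logb_le_two (div_nonneg (norm_nonneg w) hc.le) ((div_le_one hc).mpr hw)
  calc ‖hQE w + w * (Real.logb 2 c : ℂ)‖ = c * (‖w‖ / c * |Real.logb 2 (‖w‖ / c)|) := by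
        rw [hquot, norm_mul, norm_neg, Complex.norm_real, Real.norm_eq_abs]
        field_simp
    _ ≤ c * 2 := by gcongr
    _ = 2 * c := mul_comm c 2

lemma norm_sum_hQE_sub_sum_hQE_le {ι : Type*} [Fintype ι] {w w' : ι → ℂ} {c : ℝ}
    (hw : ∀ i, ‖w i‖ ≤ c) (hw' : ∀ i, ‖w' i‖ ≤ c) (hsum : ∑ i, w' i = ∑ i, w i) :
    ‖∑ i, hQE (w' i) - ∑ i, hQE (w i)‖ ≤ 4 * Fintype.card ι * c := by
  set L : ℂ := (Real.logb 2 c : ℂ)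
  have hshift : ∑ i, hQE (w' i) - ∑ i, hQE (w i)
      = ∑ i, (hQE (w' i) + w' i * L) - ∑ i, (hQE (w i) + w i * L) := by
    simp only [sum_add_distrib, ← sum_mul, hsum]
    ring
  have hbound : ∀ v : ι → ℂ, (∀ i, ‖v i‖ ≤ c) →
      ‖∑ i, (hQE (v i) + v i * L)‖ ≤ Fintype.card ι * (2 * c) :=
    fun v hv => (norm_sum_le _ _).trans <|
      (sum_le_sum fun i _ => norm_hQE_add_mul_logb_le (hv i)).trans_eq (by simp)
  calc ‖∑ i, hQE (w' i) - ∑ i, hQE (w i)‖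
      ≤ ‖∑ i, (hQE (w' i) + w' i * L)‖ + ‖∑ i, (hQE (w i) + w i * L)‖ := hshift ▸ norm_sub_le _ _
    _ ≤ Fintype.card ι * (2 * c) + Fintype.card ι * (2 * c) :=
        add_le_add (hbound w' hw') (hbound w hw)
    _ = 4 * Fintype.card ι * c := by ring

noncomputable def quasiEntropy {ι : Type*} [Fintype ι] (x y : ι → ℂ) : ℂ :=
  ∑ i, hQE (x i * conj (y i))

section UnitaryInvariance

variable {ι : Type*} [Fintype ι]

lemma norm_mul_conj_le_sqrt_mul_sqrt (x y : ι → ℂ) (i : ι) :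
    ‖x i * conj (y i)‖ ≤ √(∑ j, ‖x j‖ ^ 2) * √(∑ j, ‖y j‖ ^ 2) := by
  have hcoord : ∀ v : ι → ℂ, ‖v i‖ ≤ √(∑ j, ‖v j‖ ^ 2) := fun v =>
    Real.le_sqrt_of_sq_le <| single_le_sum (fun j _ => sq_nonneg ‖v j‖) (mem_univ i)
  rw [norm_mul, Complex.norm_conj]
  exact mul_le_mul (hcoord x) (hcoord y) (norm_nonneg _) (Real.sqrt_nonneg _)

variable [DecidableEq ι] {U : Matrix ι ι ℂ}

lemma sum_mulVec_mul_conj_mulVec (hU : U ∈ unitaryGroup ι ℂ) (x y : ι → ℂ) :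
    ∑ i, (U *ᵥ x) i * conj ((U *ᵥ y) i) = ∑ i, x i * conj (y i) :=
  calc (U *ᵥ x) ⬝ᵥ star (U *ᵥ y)
      = (star y ᵥ* (star U * U)) ⬝ᵥ x := by
        rw [dotProduct_comm, star_mulVec, dotProduct_mulVec, vecMul_vecMul, star_eq_conjTranspose]
    _ = x ⬝ᵥ star y := by
        rw [mem_unitaryGroup_iff'.mp hU, vecMul_one, dotProduct_comm]

lemma sum_norm_mulVec_sq (hU : U ∈ unitaryGroup ι ℂ) (x : ι → ℂ) :
    ∑ i, ‖(U *ᵥ x) i‖ ^ 2 = ∑ i, ‖x i‖ ^ 2 := by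
  have h := sum_mulVec_mul_conj_mulVec hU x x
  simp only [Complex.mul_conj'] at h
  exact_mod_cast h

lemma norm_quasiEntropy_mulVec_sub_le (hU : U ∈ unitaryGroup ι ℂ) (x y : ι → ℂ) :
    ‖quasiEntropy (U *ᵥ x) (U *ᵥ y) - quasiEntropy x y‖
      ≤ 4 * Fintype.card ι * (√(∑ i, ‖x i‖ ^ 2) * √(∑ i, ‖y i‖ ^ 2)) := by
  refine norm_sum_hQE_sub_sum_hQE_le (norm_mul_conj_le_sqrt_mul_sqrt x y) (fun i => ?_)
    (sum_mulVec_mul_conj_mulVec hU x y)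
  simpa only [sum_norm_mulVec_sq hU] using norm_mul_conj_le_sqrt_mul_sqrt (U *ᵥ x) (U *ᵥ y) i

end UnitaryInvariance

lemma quasiEntropy_sub_quasiEntropy_eq_of_eq_off {ι : Type*} [Fintype ι] {a b : ι} (hab : a ≠ b)
    {x y x' y' : ι → ℂ} (hx : ∀ i, i ≠ a → i ≠ b → x' i = x i)
    (hy : ∀ i, i ≠ a → i ≠ b → y' i = y i) :
    quasiEntropy x' y' - quasiEntropy x y
      = quasiEntropy ![x' a, x' b] ![y' a, y' b] - quasiEntropy ![x a, x b] ![y a, y b] := by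
  rw [quasiEntropy, quasiEntropy, ← sum_sub_distrib,
    Fintype.sum_eq_add a b hab fun i hi => by rw [hx i hi.1 hi.2, hy i hi.1 hi.2, sub_self]]
  simp only [quasiEntropy, Fin.sum_univ_two, cons_val_zero, cons_val_one]
  ring

lemma LaurentPolynomial.coeff_C_mul {R : Type*} [Semiring R] (c : R) (p : LaurentPolynomial R)
    (k : ℤ) : (C c * p).coeff k = c * p.coeff k := by
  rw [← smul_eq_C_mul]; rfl

lemma Matrix.mul_apply_eq_add_of_ne {l m o α : Type*} [Fintype m] [Semiring α] {G : Matrix l m α}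
    {X : Matrix m o α} {a b : m} (hab : a ≠ b) {i : l} (hG : ∀ r, r ≠ a → r ≠ b → G i r = 0)
    (j : o) : (G * X) i j = G i a * X a j + G i b * X b j := by
  rw [mul_apply, Fintype.sum_eq_add a b hab fun r hr => by rw [hG r hr.1 hr.2, zero_mul]]

lemma sum_sum_sqrt_mul_sqrt_le {ι κ : Type*} (s : Finset ι) (t : Finset κ) {f g : ι → κ → ℝ}
    (hf : ∀ i k, 0 ≤ f i k) (hg : ∀ i k, 0 ≤ g i k) :
    ∑ i ∈ s, ∑ k ∈ t, √(f i k) * √(g i k)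
      ≤ √(∑ i ∈ s, ∑ k ∈ t, f i k) * √(∑ i ∈ s, ∑ k ∈ t, g i k) := by
  simpa only [sum_product] using Real.sum_sqrt_mul_sqrt_le (s ×ˢ t) (f := fun p => f p.1 p.2)
    (g := fun p => g p.1 p.2) (fun p => hf p.1 p.2) (fun p => hg p.1 p.2)

section LaurentMatrix

variable {n : ℕ}

lemma IsRotationGate.exists_unitary {R : Matrix (Fin n) (Fin n) (LaurentPolynomial ℂ)}
    (hR : IsRotationGate R) :
    ∃ (a b : Fin n) (U : Matrix (Fin 2) (Fin 2) ℂ), a ≠ b ∧ U ∈ unitaryGroup (Fin 2) ℂ ∧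
      (∀ (X : Matrix (Fin n) (Fin n) (LaurentPolynomial ℂ)) i j, i ≠ a → i ≠ b →
        (R * X) i j = X i j) ∧
      ∀ (X : Matrix (Fin n) (Fin n) (LaurentPolynomial ℂ)) j k,
        ![((R * X) a j).coeff k, ((R * X) b j).coeff k]
          = U *ᵥ ![(X a j).coeff k, (X b j).coeff k] := by
  obtain ⟨a, b, R₂, hab, horth, haa, habR, hba, hbb, hdiag, hoff⟩ := hR
  refine ⟨a, b, R₂.map Complex.ofRealHom, hab, ?_, fun X i j hia hib => ?_, fun X j k => ?_⟩
  · have hstar : star (R₂.map Complex.ofRealHom) = R₂ᵀ.map Complex.ofRealHom := by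
      ext i j; simp
    rw [mem_unitaryGroup_iff', hstar, ← Matrix.map_mul, horth,
      Matrix.map_one _ (map_zero _) (map_one _)]
  · rw [mul_apply, Fintype.sum_eq_single i fun l hl => by
        rw [hoff i l (Ne.symm hl) (fun h => hia h.1) (fun h => hib h.1), zero_mul],
      hdiag i hia hib, one_mul]
  · have hrowa := mul_apply_eq_add_of_ne (X := X) hab
      (fun l hla hlb => hoff a l (Ne.symm hla) (fun h => hlb h.2) (fun h => hab h.1)) j
    have hrowb := mul_apply_eq_add_of_ne (X := X) hab
      (fun l hla hlb => hoff b l (Ne.symm hlb) (fun h => hab h.1.symm) (fun h => hla h.2)) j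
    ext t
    fin_cases t <;> simp [hrowa, hrowb, haa, habR, hba, hbb, mulVec, dotProduct, coeff_C_mul]

lemma Phi_eq_sum_quasiEntropy (A B M : Matrix (Fin n) (Fin n) (LaurentPolynomial ℂ)) (S : Finset ℤ)
    (hA : ∀ i j, ((M * A) i j).coeff.support ⊆ S) (hB : ∀ i j, ((M * B) i j).coeff.support ⊆ S) :
    Phi A B M = ∑ j, ∑ k ∈ S,
      quasiEntropy (fun i => ((M * A) i j).coeff k) (fun i => ((M * B) i j).coeff k) := by
  have hext : ∀ i j, ∑ k ∈ ((M * A) i j).coeff.support ∪ ((M * B) i j).coeff.support,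
      hQE (((M * A) i j).coeff k * conj (((M * B) i j).coeff k))
      = ∑ k ∈ S, hQE (((M * A) i j).coeff k * conj (((M * B) i j).coeff k)) := fun i j =>
    sum_subset (union_subset (hA i j) (hB i j)) fun k _ hk => by
      rw [Finsupp.notMem_support_iff.mp fun h => hk (mem_union_left _ h), zero_mul, hQE, neg_zero,
        zero_mul]
  simp only [Phi, hext, quasiEntropy]
  rw [sum_comm]
  exact sum_congr rfl fun j _ => sum_comm

lemma support_coeff_subset_matSupport (X : Matrix (Fin n) (Fin n) (LaurentPolynomial ℂ))
    (i j : Fin n) : (X i j).coeff.support ⊆ matSupport X :=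
  subset_biUnion_of_mem (fun ij : Fin n × Fin n => (X ij.1 ij.2).coeff.support) (mem_univ (i, j))

lemma exists_support_coeff_subset (l : List (Matrix (Fin n) (Fin n) (LaurentPolynomial ℂ))) :
    ∃ S : Finset ℤ, ∀ X ∈ l, ∀ i j, (X i j).coeff.support ⊆ S := by
  induction l with
  | nil => exact ⟨∅, by simp⟩
  | cons X l ih =>
    obtain ⟨S, hS⟩ := ih
    refine ⟨matSupport X ∪ S, fun Y hY i j => ?_⟩
    rcases List.mem_cons.mp hY with rfl | hY
    · exact (support_coeff_subset_matSupport Y i j).trans subset_union_left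
    · exact (hS Y hY i j).trans subset_union_right

lemma sum_sum_norm_coeff_sq_eq_rowNorm_sq (X : Matrix (Fin n) (Fin n) (LaurentPolynomial ℂ))
    (i : Fin n) {S : Finset ℤ} (hS : ∀ j, (X i j).coeff.support ⊆ S) :
    ∑ j, ∑ k ∈ S, ‖(X i j).coeff k‖ ^ 2 = rowNorm X i ^ 2 := by
  rw [rowNorm, Real.sq_sqrt (sum_nonneg fun j _ => sq_nonneg _)]
  refine sum_congr rfl fun j _ => ?_
  rw [pnorm, Real.sq_sqrt (sum_nonneg fun k _ => sq_nonneg _)]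
  exact (sum_subset (hS j) fun k _ hk => by rw [Finsupp.notMem_support_iff.mp hk, norm_zero,
    zero_pow two_ne_zero]).symm

lemma sqrt_rowNorm_sq_add_rowNorm_sq_le (X : Matrix (Fin n) (Fin n) (LaurentPolynomial ℂ))
    (a b : Fin n) : √(rowNorm X a ^ 2 + rowNorm X b ^ 2) ≤ √2 * norm2inf X := by
  have hle : ∀ i, rowNorm X i ≤ norm2inf X := le_ciSup (Set.finite_range _).bddAbove
  have hsq : ∀ i, rowNorm X i ^ 2 ≤ norm2inf X ^ 2 := fun i =>
    pow_le_pow_left₀ (Real.sqrt_nonneg _) (hle i) 2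
  rw [← Real.sqrt_sq ((Real.sqrt_nonneg _).trans (hle a)), ← Real.sqrt_mul zero_le_two]
  exact Real.sqrt_le_sqrt (by linarith [hsq a, hsq b])

lemma sum_sum_sqrt_mul_sqrt_rows_le (N P : Matrix (Fin n) (Fin n) (LaurentPolynomial ℂ))
    (a b : Fin n) {S : Finset ℤ} (hN : ∀ i j, (N i j).coeff.support ⊆ S)
    (hP : ∀ i j, (P i j).coeff.support ⊆ S) :
    ∑ j, ∑ k ∈ S, √(‖(N a j).coeff k‖ ^ 2 + ‖(N b j).coeff k‖ ^ 2)
        * √(‖(P a j).coeff k‖ ^ 2 + ‖(P b j).coeff k‖ ^ 2)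
      ≤ 2 * norm2inf N * norm2inf P :=
  calc _ ≤ √(∑ j, ∑ k ∈ S, (‖(N a j).coeff k‖ ^ 2 + ‖(N b j).coeff k‖ ^ 2))
          * √(∑ j, ∑ k ∈ S, (‖(P a j).coeff k‖ ^ 2 + ‖(P b j).coeff k‖ ^ 2)) :=
        sum_sum_sqrt_mul_sqrt_le univ S (fun _ _ => by positivity) fun _ _ => by positivity
    _ = √(rowNorm N a ^ 2 + rowNorm N b ^ 2) * √(rowNorm P a ^ 2 + rowNorm P b ^ 2) := by
        simp only [sum_add_distrib, sum_sum_norm_coeff_sq_eq_rowNorm_sq _ _ (hN _ ·),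
          sum_sum_norm_coeff_sq_eq_rowNorm_sq _ _ (hP _ ·)]
    _ ≤ (√2 * norm2inf N) * (√2 * norm2inf P) :=
        mul_le_mul (sqrt_rowNorm_sq_add_rowNorm_sq_le N a b)
          (sqrt_rowNorm_sq_add_rowNorm_sq_le P a b) (Real.sqrt_nonneg _)
          ((Real.sqrt_nonneg _).trans (sqrt_rowNorm_sq_add_rowNorm_sq_le N a b))
    _ = 2 * norm2inf N * norm2inf P := by
        rw [mul_mul_mul_comm, Real.mul_self_sqrt zero_le_two, mul_assoc]

lemma Phi_mul_sub_Phi_eq_sum {R : Matrix (Fin n) (Fin n) (LaurentPolynomial ℂ)} {a b : Fin n}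
    {U : Matrix (Fin 2) (Fin 2) ℂ} (hab : a ≠ b)
    (hfix : ∀ (X : Matrix (Fin n) (Fin n) (LaurentPolynomial ℂ)) i j, i ≠ a → i ≠ b →
      (R * X) i j = X i j)
    (hpair : ∀ (X : Matrix (Fin n) (Fin n) (LaurentPolynomial ℂ)) j k,
      ![((R * X) a j).coeff k, ((R * X) b j).coeff k] = U *ᵥ ![(X a j).coeff k, (X b j).coeff k])
    (A B M : Matrix (Fin n) (Fin n) (LaurentPolynomial ℂ)) {S : Finset ℤ}
    (hS : ∀ X ∈ [M * A, M * B, R * (M * A), R * (M * B)], ∀ i j, (X i j).coeff.support ⊆ S) :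
    Phi A B (R * M) - Phi A B M = ∑ j, ∑ k ∈ S,
      (quasiEntropy (U *ᵥ ![((M * A) a j).coeff k, ((M * A) b j).coeff k])
          (U *ᵥ ![((M * B) a j).coeff k, ((M * B) b j).coeff k])
        - quasiEntropy ![((M * A) a j).coeff k, ((M * A) b j).coeff k]
          ![((M * B) a j).coeff k, ((M * B) b j).coeff k]) := by
  rw [Phi_eq_sum_quasiEntropy A B M S (hS _ (by simp)) (hS _ (by simp)),
    Phi_eq_sum_quasiEntropy A B (R * M) S (by simpa only [Matrix.mul_assoc] using hS _ (by simp))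
      (by simpa only [Matrix.mul_assoc] using hS _ (by simp))]
  simp only [Matrix.mul_assoc, ← sum_sub_distrib, ← hpair]
  refine sum_congr rfl fun j _ => sum_congr rfl fun k _ => ?_
  exact quasiEntropy_sub_quasiEntropy_eq_of_eq_off hab (fun i hia hib => by rw [hfix _ i j hia hib])
    (fun i hia hib => by rw [hfix _ i j hia hib])

lemma norm_sum_sum_quasiEntropy_mulVec_sub_le {U : Matrix (Fin 2) (Fin 2) ℂ}
    (hU : U ∈ unitaryGroup (Fin 2) ℂ) (N P : Matrix (Fin n) (Fin n) (LaurentPolynomial ℂ))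
    (a b : Fin n) {S : Finset ℤ} (hN : ∀ i j, (N i j).coeff.support ⊆ S)
    (hP : ∀ i j, (P i j).coeff.support ⊆ S) :
    ‖∑ j, ∑ k ∈ S,
      (quasiEntropy (U *ᵥ ![(N a j).coeff k, (N b j).coeff k])
          (U *ᵥ ![(P a j).coeff k, (P b j).coeff k])
        - quasiEntropy ![(N a j).coeff k, (N b j).coeff k] ![(P a j).coeff k, (P b j).coeff k])‖
      ≤ 16 * norm2inf N * norm2inf P :=
  calc _ ≤ ∑ j, ∑ k ∈ S, 8 * (√(‖(N a j).coeff k‖ ^ 2 + ‖(N b j).coeff k‖ ^ 2)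
          * √(‖(P a j).coeff k‖ ^ 2 + ‖(P b j).coeff k‖ ^ 2)) := by
        refine (norm_sum_le _ _).trans (sum_le_sum fun j _ => (norm_sum_le _ _).trans
          (sum_le_sum fun k _ => ?_))
        refine (norm_quasiEntropy_mulVec_sub_le hU _ _).trans_eq ?_
        simp only [Fintype.card_fin, Fin.sum_univ_two, cons_val_zero, cons_val_one]
        norm_num
    _ ≤ 8 * (2 * norm2inf N * norm2inf P) := by
        simp only [← mul_sum]
        gcongr
        exact sum_sum_sqrt_mul_sqrt_rows_le N P a b hN hP
    _ = 16 * norm2inf N * norm2inf P := by ring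

end LaurentMatrix

/-- bounded change of the preconditioned quasi-entropy under a rotation gate. -/
theorem phi_rotation_change_bound :
    ∃ C : ℝ, 0 < C ∧
      ∀ (n : ℕ) (M A B R : Matrix (Fin n) (Fin n) (LaurentPolynomial ℂ)),
        IsRotationGate R →
        ‖Phi A B (R * M) - Phi A B M‖
          ≤ C * norm2inf (M * A) * norm2inf (M * B) := by
  refine ⟨16, by norm_num, fun n M A B R hR => ?_⟩
  obtain ⟨a, b, U, hab, hU, hfix, hpair⟩ := hR.exists_unitary
  obtain ⟨S, hS⟩ := exists_support_coeff_subset [M * A, M * B, R * (M * A), R * (M * B)]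
  rw [Phi_mul_sub_Phi_eq_sum hab hfix hpair A B M hS]
  exact norm_sum_sum_quasiEntropy_mulVec_sub_le hU _ _ a b (hS _ (by simp)) (hS _ (by simp))
end

section
/- Algebraically well-conditioned implies geometrically well-conditioned: let Δ ∈ (0,1), κ ≥ 1, and let (M_0, …, M_m) be a Laurent lift that is Δ-algebraically κ-well conditioned. Then for every t = 0, …, m, the complex matrix M_t[Δ] is invertible and ‖M_t[Δ]‖ · ‖M_t[Δ]⁻¹‖ ≤ κ, where ‖·‖ is the operator (spectral) norm. -/
open scoped ComplexConjugate
open LaurentPolynomial Finset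

/-!
A gate evaluated at `ω ≠ 0` satisfies `G[(conj ω)⁻¹]ᴴ * G[ω] = 1`: a rotation gate evaluates to a
constant real orthogonal matrix, a monomial gate to `diag(1, …, ω^k, …, 1)`. The identity is stable
under products, so it holds for every `M_t`. At `ω = Δ` it shows that `M_t[Δ]` is invertible with
inverse `M_t[Δ⁻¹]ᴴ`, and on the unit circle it makes `M_t[ζ]` unitary, of norm at most `1`.
Writing `M_t[z] = z ^ val(M_t) • P(z)` with `P` a matrix polynomial, the maximum modulus principle
bounds `‖P‖` by `1` on the unit disc, so `‖M_t[Δ]‖ ≤ Δ ^ val(M_t)`; symmetrically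
`‖M_t[Δ⁻¹]‖ ≤ Δ ^ (-deg(M_t))`, and the product of the two bounds is `Δ ^ (val - deg) ≤ κ`.
-/

open scoped Matrix

noncomputable def levalAlgHom (ω : ℂˣ) : LaurentPolynomial ℂ →ₐ[ℂ] ℂ :=
  AddMonoidAlgebra.lift ℂ ℂ ℤ ((Units.coeHom ℂ).comp (zpowersHom ℂˣ ω))

theorem leval_eq_levalAlgHom (ω : ℂˣ) (p : LaurentPolynomial ℂ) :
    Leval ω p = levalAlgHom ω p := by
  rw [levalAlgHom, AddMonoidAlgebra.lift_apply]
  exact Finset.sum_congr rfl fun k _ => by simp [smul_eq_mul]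

theorem leval_single (ω : ℂ) (k : ℤ) (c : ℂ) :
    Leval ω (AddMonoidAlgebra.single k c) = c * ω ^ k := by
  change (Finsupp.single k c).sum (fun k c => c * ω ^ k) = _
  exact Finsupp.sum_single_index (zero_mul _)

theorem leval_C (ω c : ℂ) : Leval ω (C c) = c := by
  simpa using leval_single ω 0 c

theorem leval_T (ω : ℂ) (k : ℤ) : Leval ω (T k) = ω ^ k := by
  simpa using leval_single ω k 1

theorem leval_one (ω : ℂ) : Leval ω 1 = 1 := by
  simpa using leval_C ω 1

theorem leval_zero (ω : ℂ) : Leval ω 0 = 0 := by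
  simp [Leval]

section MatEval

variable {n : ℕ}

theorem matEval_one (ω : ℂ) :
    MatEval ω (1 : Matrix (Fin n) (Fin n) (LaurentPolynomial ℂ)) = 1 :=
  Matrix.map_one _ (leval_zero ω) (leval_one ω)

theorem matEval_mul {ω : ℂ} (hω : ω ≠ 0)
    (A B : Matrix (Fin n) (Fin n) (LaurentPolynomial ℂ)) :
    MatEval ω (A * B) = MatEval ω A * MatEval ω B := by
  lift ω to ℂˣ using hω.isUnit
  have hhom : Leval (ω : ℂ) = (levalAlgHom ω).toRingHom := funext (leval_eq_levalAlgHom ω)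
  rw [MatEval, MatEval, MatEval, hhom, Matrix.map_mul]

def coeffMat (M : Matrix (Fin n) (Fin n) (LaurentPolynomial ℂ)) (k : ℤ) :
    Matrix (Fin n) (Fin n) ℂ :=
  Matrix.of fun i j => (M i j).coeff k

theorem support_subset_matSupport (M : Matrix (Fin n) (Fin n) (LaurentPolynomial ℂ))
    (i j : Fin n) : (M i j).coeff.support ⊆ matSupport M :=
  fun _ hk => Finset.mem_biUnion.2 ⟨(i, j), Finset.mem_univ _, hk⟩

theorem matVal_le {M : Matrix (Fin n) (Fin n) (LaurentPolynomial ℂ)} {k : ℤ}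
    (hk : k ∈ matSupport M) : matVal M ≤ k := by
  obtain ⟨v, hv⟩ := Finset.min_of_mem hk
  have hvk := Finset.min_le hk
  rw [hv, WithTop.coe_le_coe] at hvk
  rwa [matVal, hv, WithTop.untopD_coe]

theorem le_matDeg {M : Matrix (Fin n) (Fin n) (LaurentPolynomial ℂ)} {k : ℤ}
    (hk : k ∈ matSupport M) : k ≤ matDeg M := by
  obtain ⟨d, hd⟩ := Finset.max_of_mem hk
  have hkd := Finset.le_max hk
  rw [hd, WithBot.coe_le_coe] at hkd
  rwa [matDeg, hd, WithBot.unbotD_coe]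

theorem matEval_eq_sum (ω : ℂ) (M : Matrix (Fin n) (Fin n) (LaurentPolynomial ℂ)) :
    MatEval ω M = ∑ k ∈ matSupport M, ω ^ k • coeffMat M k := by
  ext i j
  simp only [MatEval, Matrix.map_apply, Matrix.sum_apply, Matrix.smul_apply, coeffMat,
    Matrix.of_apply, smul_eq_mul, Leval]
  refine Finset.sum_subset (support_subset_matSupport M i j) (fun k _ hk => ?_) |>.trans
    (Finset.sum_congr rfl fun k _ => mul_comm _ _)
  rw [Finsupp.notMem_support_iff.1 hk, zero_mul]

end MatEval

section Paraunitary

variable {n : ℕ}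

/-- Pointwise form of `IsParaunitary`: evaluating the para-conjugate `M*` at `ω` gives
`M[(conj ω)⁻¹]ᴴ`. -/
def IsPointwiseParaunitary (M : Matrix (Fin n) (Fin n) (LaurentPolynomial ℂ)) : Prop :=
  ∀ ω : ℂ, ω ≠ 0 → (MatEval (conj ω)⁻¹ M)ᴴ * MatEval ω M = 1

theorem isPointwiseParaunitary_one :
    IsPointwiseParaunitary (1 : Matrix (Fin n) (Fin n) (LaurentPolynomial ℂ)) := by
  intro ω _
  rw [matEval_one, matEval_one, Matrix.conjTranspose_one, one_mul]

theorem IsPointwiseParaunitary.mul {A B : Matrix (Fin n) (Fin n) (LaurentPolynomial ℂ)}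
    (hA : IsPointwiseParaunitary A) (hB : IsPointwiseParaunitary B) :
    IsPointwiseParaunitary (A * B) := by
  intro ω hω
  have hω' : (conj ω)⁻¹ ≠ 0 := inv_ne_zero ((map_ne_zero _).2 hω)
  rw [matEval_mul hω', matEval_mul hω, Matrix.conjTranspose_mul, Matrix.mul_assoc,
    ← Matrix.mul_assoc _ _ (MatEval ω B), hA ω hω, Matrix.one_mul, hB ω hω]

theorem IsRotationGate.exists_rows {G : Matrix (Fin n) (Fin n) (LaurentPolynomial ℂ)}
    (h : IsRotationGate G) :
    ∃ (a b : Fin n) (R : Matrix (Fin 2) (Fin 2) ℝ), a ≠ b ∧ Rᵀ * R = 1 ∧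
      (∀ j, G a j = if j = a then C (R 0 0 : ℂ) else if j = b then C (R 0 1 : ℂ) else 0) ∧
      (∀ j, G b j = if j = a then C (R 1 0 : ℂ) else if j = b then C (R 1 1 : ℂ) else 0) ∧
      ∀ l j, l ≠ a → l ≠ b → G l j = if l = j then 1 else 0 := by
  obtain ⟨a, b, R, hab, hR, haa, hab', hba, hbb, hdiag, hoff⟩ := h
  refine ⟨a, b, R, hab, hR, fun j => ?_, fun j => ?_, fun l j hla hlb => ?_⟩
  · split_ifs with hja hjb
    · rw [hja, haa]
    · rw [hjb, hab']
    · exact hoff a j (Ne.symm hja) (fun h => hjb h.2) (fun h => hab h.1)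
  · split_ifs with hja hjb
    · rw [hja, hba]
    · rw [hjb, hbb]
    · exact hoff b j (Ne.symm hjb) (fun h => hab h.1.symm) (fun h => hja h.2)
  · split_ifs with hlj
    · exact hlj ▸ hdiag l hla hlb
    · exact hoff l j hlj (fun h => hla h.1) (fun h => hlb h.1)

theorem IsRotationGate.conjTranspose_matEval_mul_matEval
    {G : Matrix (Fin n) (Fin n) (LaurentPolynomial ℂ)} (h : IsRotationGate G) (ω₁ ω₂ : ℂ) :
    (MatEval ω₁ G)ᴴ * MatEval ω₂ G = 1 := by
  obtain ⟨a, b, R, hab, hR, hrowA, hrowB, hrest⟩ := h.exists_rows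
  have hRcols : ∀ p q : Fin 2,
      (R 0 p : ℂ) * R 0 q + R 1 p * R 1 q = if p = q then 1 else 0 := by
    intro p q
    have := congrFun (congrFun hR p) q
    simp only [Matrix.mul_apply, Matrix.transpose_apply, Fin.sum_univ_two,
      Matrix.one_apply] at this
    split_ifs at this ⊢ <;> exact_mod_cast this
  ext i j
  simp only [Matrix.mul_apply, Matrix.conjTranspose_apply, MatEval, Matrix.map_apply,
    Matrix.one_apply]
  set rest := (univ.erase a).erase b
  have hsum_rest : ∑ l ∈ rest, star (Leval ω₁ (G l i)) * Leval ω₂ (G l j) =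
      if i ∈ rest then (if i = j then 1 else 0) else 0 := by
    rw [← Finset.sum_ite_eq' rest i fun l => if l = j then (1 : ℂ) else 0]
    refine Finset.sum_congr rfl fun l hl => ?_
    rw [hrest l i (ne_of_mem_erase (mem_of_mem_erase hl)) (ne_of_mem_erase hl),
      hrest l j (ne_of_mem_erase (mem_of_mem_erase hl)) (ne_of_mem_erase hl)]
    split_ifs <;> simp_all [leval_one, leval_zero]
  rw [← Finset.add_sum_erase _ _ (mem_univ a),
    ← Finset.add_sum_erase _ _ (mem_erase.2 ⟨hab.symm, mem_univ b⟩), hsum_rest,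
    hrowA, hrowA, hrowB, hrowB]
  simp only [rest, mem_erase, mem_univ, and_true]
  split_ifs <;> simp_all [leval_C, leval_zero, Complex.conj_ofReal]

theorem IsRotationGate.isPointwiseParaunitary {G : Matrix (Fin n) (Fin n) (LaurentPolynomial ℂ)}
    (h : IsRotationGate G) : IsPointwiseParaunitary G :=
  fun _ _ => h.conjTranspose_matEval_mul_matEval _ _

theorem IsMonomialGate.exists_matEval_eq_diagonal
    {G : Matrix (Fin n) (Fin n) (LaurentPolynomial ℂ)} (h : IsMonomialGate G) :
    ∃ (a : Fin n) (k : ℤ),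
      ∀ ω : ℂ, MatEval ω G = Matrix.diagonal (Function.update 1 a (ω ^ k)) := by
  obtain ⟨a, k, haa, hdiag, hoff⟩ := h
  refine ⟨a, k, fun ω => ?_⟩
  ext i j
  rcases eq_or_ne i j with rfl | hij
  · rcases eq_or_ne i a with rfl | hia
    · simp [MatEval, haa, leval_T]
    · simp [MatEval, hdiag i hia, hia, leval_one]
  · simp [MatEval, hoff i j hij, hij, leval_zero]

theorem IsMonomialGate.isPointwiseParaunitary {G : Matrix (Fin n) (Fin n) (LaurentPolynomial ℂ)}
    (h : IsMonomialGate G) : IsPointwiseParaunitary G := by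
  obtain ⟨a, k, hG⟩ := h.exists_matEval_eq_diagonal
  intro ω hω
  rw [hG, hG, Matrix.diagonal_conjTranspose, Matrix.diagonal_mul_diagonal, ← Matrix.diagonal_one]
  congr 1
  ext i
  rcases eq_or_ne i a with rfl | hia
  · simp [zpow_ne_zero k hω]
  · simp [hia]

theorem IsLaurentLift.isPointwiseParaunitary {m : ℕ}
    {M : ℕ → Matrix (Fin n) (Fin n) (LaurentPolynomial ℂ)} (hlift : IsLaurentLift m M) :
    ∀ t ≤ m, IsPointwiseParaunitary (M t) := by
  intro t ht
  induction t with
  | zero => exact hlift.1 ▸ isPointwiseParaunitary_one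
  | succ t ih =>
    obtain ⟨G, hG, hstep⟩ := hlift.2 t ht
    rw [hstep]
    refine IsPointwiseParaunitary.mul ?_ (ih (Nat.le_of_succ_le ht))
    exact hG.elim IsRotationGate.isPointwiseParaunitary IsMonomialGate.isPointwiseParaunitary

end Paraunitary

section MaximumModulus

variable {E : Type*} [NormedAddCommGroup E] [NormedSpace ℂ E]

theorem norm_sum_zpow_smul_le_of_norm_le_one
    {S : Finset ℤ} {A : ℤ → E} {d : ℤ} (hd : ∀ k ∈ S, d ≤ k) {c : ℝ}
    (hcircle : ∀ ζ : ℂ, ‖ζ‖ = 1 → ‖∑ k ∈ S, ζ ^ k • A k‖ ≤ c)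
    {z : ℂ} (hz₀ : z ≠ 0) (hz₁ : ‖z‖ ≤ 1) :
    ‖∑ k ∈ S, z ^ k • A k‖ ≤ c * ‖z‖ ^ d := by
  set F : ℂ → E := fun w => ∑ k ∈ S, w ^ (k - d).toNat • A k
  have hfactor : ∀ w : ℂ, w ≠ 0 → ∑ k ∈ S, w ^ k • A k = w ^ d • F w := by
    intro w hw
    simp only [F, Finset.smul_sum, smul_smul]
    refine Finset.sum_congr rfl fun k hk => ?_
    rw [← zpow_natCast, ← zpow_add₀ hw, Int.toNat_of_nonneg (sub_nonneg.2 (hd k hk)),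
      add_sub_cancel]
  have hF_circle : ∀ ζ : ℂ, ‖ζ‖ = 1 → ‖F ζ‖ ≤ c := by
    intro ζ hζ
    have hζ₀ : ζ ≠ 0 := norm_ne_zero_iff.1 (hζ ▸ one_ne_zero)
    simpa [hfactor ζ hζ₀, norm_smul, norm_zpow, hζ] using hcircle ζ hζ
  have hF_diff : Differentiable ℂ F :=
    Differentiable.fun_sum fun k _ => (differentiable_pow _).smul_const _
  have hFz : ‖F z‖ ≤ c := by
    refine Complex.norm_le_of_forall_mem_frontier_norm_le (U := Metric.ball 0 1)
      Metric.isBounded_ball hF_diff.diffContOnCl (fun ζ hζ => hF_circle ζ ?_) ?_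
    · simpa [frontier_ball (0 : ℂ) one_ne_zero] using hζ
    · simpa [closure_ball (0 : ℂ) one_ne_zero] using hz₁
  rw [hfactor z hz₀, norm_smul, norm_zpow, mul_comm]
  exact mul_le_mul_of_nonneg_right hFz (zpow_nonneg (norm_nonneg z) d)

theorem norm_sum_zpow_smul_le_of_one_le_norm
    {S : Finset ℤ} {A : ℤ → E} {d : ℤ} (hd : ∀ k ∈ S, k ≤ d) {c : ℝ}
    (hcircle : ∀ ζ : ℂ, ‖ζ‖ = 1 → ‖∑ k ∈ S, ζ ^ k • A k‖ ≤ c)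
    {z : ℂ} (hz₁ : 1 ≤ ‖z‖) :
    ‖∑ k ∈ S, z ^ k • A k‖ ≤ c * ‖z‖ ^ d := by
  have hreflect : ∀ w : ℂ, ∑ k ∈ S, w ^ k • A k =
      ∑ k ∈ S.map (Equiv.neg ℤ).toEmbedding, w⁻¹ ^ k • A (-k) := by
    intro w
    simp [Finset.sum_map, inv_zpow', neg_neg]
  have hz₀ : z ≠ 0 := norm_ne_zero_iff.1 (by linarith)
  rw [hreflect]
  have := norm_sum_zpow_smul_le_of_norm_le_one (S := S.map (Equiv.neg ℤ).toEmbedding)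
    (A := fun k => A (-k)) (d := -d) (c := c) ?_ ?_ (inv_ne_zero hz₀) ?_
  · simpa [norm_inv, inv_zpow', neg_neg] using this
  · simpa using fun k (hk : -k ∈ S) => by linarith [hd _ hk]
  · intro ζ hζ
    simpa [← hreflect, norm_inv, hζ] using hcircle ζ⁻¹ (by rw [norm_inv, hζ, inv_one])
  · rw [norm_inv]; exact inv_le_one_of_one_le₀ hz₁

end MaximumModulus

section L2OpNorm

open scoped Matrix.Norms.L2Operator

variable {n : ℕ}

theorem specNorm_eq_norm (A : Matrix (Fin n) (Fin n) ℂ) : specNorm A = ‖A‖ := rfl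

theorem norm_matEval_le_of_norm_le_one {M : Matrix (Fin n) (Fin n) (LaurentPolynomial ℂ)}
    {c : ℝ} (hcircle : ∀ ζ : ℂ, ‖ζ‖ = 1 → ‖MatEval ζ M‖ ≤ c)
    {z : ℂ} (hz₀ : z ≠ 0) (hz₁ : ‖z‖ ≤ 1) :
    ‖MatEval z M‖ ≤ c * ‖z‖ ^ matVal M := by
  simp only [matEval_eq_sum] at hcircle ⊢
  exact norm_sum_zpow_smul_le_of_norm_le_one (fun _ hk => matVal_le hk) hcircle hz₀ hz₁

theorem norm_matEval_le_of_one_le_norm {M : Matrix (Fin n) (Fin n) (LaurentPolynomial ℂ)}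
    {c : ℝ} (hcircle : ∀ ζ : ℂ, ‖ζ‖ = 1 → ‖MatEval ζ M‖ ≤ c)
    {z : ℂ} (hz₁ : 1 ≤ ‖z‖) :
    ‖MatEval z M‖ ≤ c * ‖z‖ ^ matDeg M := by
  simp only [matEval_eq_sum] at hcircle ⊢
  exact norm_sum_zpow_smul_le_of_one_le_norm (fun _ hk => le_matDeg hk) hcircle hz₁

theorem IsPointwiseParaunitary.norm_matEval_le_one
    {M : Matrix (Fin n) (Fin n) (LaurentPolynomial ℂ)} (hM : IsPointwiseParaunitary M)
    {ζ : ℂ} (hζ : ‖ζ‖ = 1) : ‖MatEval ζ M‖ ≤ 1 := by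
  have hζ₀ : ζ ≠ 0 := norm_ne_zero_iff.1 (hζ ▸ one_ne_zero)
  have hunitary : (MatEval ζ M)ᴴ * MatEval ζ M = 1 := by
    simpa [← map_inv₀, Complex.inv_eq_conj hζ] using hM ζ hζ₀
  have hsq : ‖MatEval ζ M‖ * ‖MatEval ζ M‖ ≤ 1 := by
    rw [← Matrix.l2_opNorm_conjTranspose_mul_self, hunitary, Matrix.cstar_norm_def, map_one]
    exact ContinuousLinearMap.norm_id_le
  nlinarith [norm_nonneg (MatEval ζ M)]

theorem IsPointwiseParaunitary.specNorm_mul_specNorm_inv_le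
    {M : Matrix (Fin n) (Fin n) (LaurentPolynomial ℂ)} (hM : IsPointwiseParaunitary M)
    {r : ℝ} (h0 : 0 < r) (h1 : r ≤ 1) :
    IsUnit (MatEval (r : ℂ) M) ∧
      specNorm (MatEval (r : ℂ) M) * specNorm (MatEval (r : ℂ) M)⁻¹ ≤
        r ^ (matVal M - matDeg M) := by
  have hr₀ : (r : ℂ) ≠ 0 := Complex.ofReal_ne_zero.2 h0.ne'
  have hr : ‖(r : ℂ)‖ = r := by rw [Complex.norm_real, Real.norm_of_nonneg h0.le]
  have hleft : (MatEval (r : ℂ)⁻¹ M)ᴴ * MatEval (r : ℂ) M = 1 := by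
    simpa [Complex.conj_ofReal] using hM r hr₀
  refine ⟨.of_mul_eq_one_right _ hleft, ?_⟩
  rw [Matrix.inv_eq_left_inv hleft, specNorm_eq_norm, specNorm_eq_norm,
    Matrix.l2_opNorm_conjTranspose]
  have hval := norm_matEval_le_of_norm_le_one (fun _ => hM.norm_matEval_le_one) hr₀
    (hr.le.trans h1)
  have hdeg := norm_matEval_le_of_one_le_norm (fun _ => hM.norm_matEval_le_one)
    (z := (r : ℂ)⁻¹) (by rw [norm_inv, hr]; exact one_le_inv_iff₀.2 ⟨h0, h1⟩)
  calc ‖MatEval (r : ℂ) M‖ * ‖MatEval (r : ℂ)⁻¹ M‖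
      ≤ (1 * r ^ matVal M) * (1 * r⁻¹ ^ matDeg M) := by
        rw [norm_inv, hr] at hdeg
        rw [hr] at hval
        exact mul_le_mul hval hdeg (norm_nonneg _) (by positivity)
    _ = r ^ (matVal M - matDeg M) := by
        rw [one_mul, one_mul, inv_zpow', ← zpow_add₀ h0.ne', sub_eq_add_neg]

end L2OpNorm

theorem algWellConditioned_implies_geomWellConditioned_general {n m : ℕ}
    (M : ℕ → Matrix (Fin n) (Fin n) (LaurentPolynomial ℂ)) (Δ κ : ℝ)
    (h0 : 0 < Δ) (h1 : Δ < 1)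
    (hlift : IsLaurentLift m M) (hcond : IsAlgWellConditioned m M Δ κ) :
    ∀ t ≤ m, IsUnit (MatEval (Δ : ℂ) (M t)) ∧
      specNorm (MatEval (Δ : ℂ) (M t)) * specNorm (MatEval (Δ : ℂ) (M t))⁻¹ ≤ κ := by
  intro t ht
  obtain ⟨hunit, hbound⟩ :=
    (hlift.isPointwiseParaunitary t ht).specNorm_mul_specNorm_inv_le h0 h1.le
  exact ⟨hunit, hbound.trans (hcond t ht)⟩

/-- algebraically well conditioned implies geometrically well conditioned. -/
theorem algWellConditioned_implies_geomWellConditioned {n m : ℕ}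
    (M : ℕ → Matrix (Fin n) (Fin n) (LaurentPolynomial ℂ)) (Δ κ : ℝ)
    (h0 : 0 < Δ) (h1 : Δ < 1) (hκ : 1 ≤ κ)
    (hlift : IsLaurentLift m M) (hcond : IsAlgWellConditioned m M Δ κ) :
    ∀ t ≤ m, IsUnit (MatEval (Δ : ℂ) (M t)) ∧
      specNorm (MatEval (Δ : ℂ) (M t)) * specNorm (MatEval (Δ : ℂ) (M t))⁻¹ ≤ κ :=
  algWellConditioned_implies_geomWellConditioned_general M Δ κ h0 h1 hlift hcond
end
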